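/- Magnitude homology of trees: let T be a tree. Then MH_{0,0}(T) is isomorphic to the free abelian group on the vertices of T; for each l > 0, MH_{l,l}(T) is isomorphic to the free abelian group on the oriented edges of T, with the class of an oriented edge (x,y) corresponding to the homology class of the alternating tuple (x,y,x,y,…) of l+1 entries; and MH_{k,l}(T) = 0 whenever k ≠ l. -/

import Mathlib

/-!
Call position `m` of a tuple critical if the step into it has length at least two, or if `x_m`
lies on a geodesic from `x_{m-1}` to `x_{m+1}`. For `k ≥ 1` and `l ≠ k` every generator of
`MC_{k,l}(T)` has a critical position. Subdividing the step into the first critical position,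
when it is long, at the first vertex of a geodesic defines `u : MC_{k,l} → MC_{k+1,l}` with
`∂u + u∂ = id`: one face of the subdivision gives back the tuple and the later ones cancel
against `u∂`. Uniqueness of geodesics in a tree is what keeps the first critical position in
place under these faces. Hence `MH_{k,l}(T) = 0` for `k ≠ l`. On the diagonal all steps are
edges, the same identity contracts the non-alternating tuples, and what is left are the
alternating cycles `(x, y, x, y, …)`, one for each oriented edge. In degree `0` there are no
boundaries.
-/

noncomputable section

namespace MagnitudeHomology

open Classical

variable {V : Type*} {W : Type*}

/-- The length `ℓ(x₀,…,x_k)` of a tuple of vertices: the sum of consecutive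
(extended) shortest-path distances. -/
def tupleLen (G : SimpleGraph V) {k : ℕ} (x : Fin (k + 1) → V) : ℕ∞ :=
  ∑ i : Fin k, G.edist (x i.castSucc) (x i.succ)

/-- The condition defining the generators of `MC_{k,l}(G)`: consecutive entries
distinct and total length `l`. -/
def IsMagTuple (G : SimpleGraph V) (l : ℕ) {k : ℕ} (x : Fin (k + 1) → V) : Prop :=
  (∀ i : Fin k, x i.castSucc ≠ x i.succ) ∧ tupleLen G x = (l : ℕ∞)

/-- The generating tuples of the magnitude chain group `MC_{k,l}(G)`. -/
def MagTuple (G : SimpleGraph V) (k l : ℕ) : Type _ :=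
  {x : Fin (k + 1) → V // IsMagTuple G l x}

/-- The magnitude chain group `MC_{k,l}(G)`: the free abelian group on tuples
`(x₀,…,x_k)` with consecutive entries distinct and length `l`. -/
def MC (G : SimpleGraph V) (k l : ℕ) : Type _ :=
  FreeAbelianGroup (MagTuple G k l)

instance (G : SimpleGraph V) (k l : ℕ) : AddCommGroup (MC G k l) :=
  inferInstanceAs (AddCommGroup (FreeAbelianGroup _))

/-- The generator of `MC_{k,l}(G)` corresponding to a tuple, or `0` if the tuple
does not satisfy the defining conditions. -/
def mcGen (G : SimpleGraph V) {k : ℕ} (l : ℕ) (x : Fin (k + 1) → V) : MC G k l :=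
  if h : IsMagTuple G l x then FreeAbelianGroup.of (⟨x, h⟩ : MagTuple G k l) else 0

/-- The magnitude differential `∂ = ∑_{i=1}^{k} (-1)^i ∂_i : MC_{k+1,l}(G) → MC_{k,l}(G)`,
where `∂_i` omits the `i`-th entry if this preserves the length, and is `0` otherwise. -/
def magDiff (G : SimpleGraph V) (k l : ℕ) : MC G (k + 1) l →+ MC G k l :=
  FreeAbelianGroup.lift fun (x : MagTuple G (k + 1) l) =>
    ∑ i : Fin k, ((-1 : ℤ) ^ ((i : ℕ) + 1)) •
      mcGen G l (x.1 ∘ Fin.succAbove i.succ.castSucc)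

/-- The subgroup of cycles: everything in degree `0`, the kernel of `∂` in
positive degrees. -/
def magCycles (G : SimpleGraph V) (l : ℕ) : (k : ℕ) → AddSubgroup (MC G k l)
  | 0 => ⊤
  | (k + 1) => (magDiff G k l).ker

/-- The boundaries, viewed as a subgroup of the cycles. -/
def magBoundaries (G : SimpleGraph V) (k l : ℕ) : AddSubgroup (magCycles G l k) :=
  ((magDiff G k l).range).addSubgroupOf (magCycles G l k)

/-- Magnitude homology `MH_{k,l}(G) = H_k(MC_{*,l}(G))`. -/
def MH (G : SimpleGraph V) (k l : ℕ) : Type _ :=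
  magCycles G l k ⧸ magBoundaries G k l

instance (G : SimpleGraph V) (k l : ℕ) : AddCommGroup (MH G k l) :=
  inferInstanceAs (AddCommGroup (_ ⧸ _))

/-- The homology class of a chain: its class if it is a cycle, `0` otherwise. -/
def mkMH (G : SimpleGraph V) (k l : ℕ) (z : MC G k l) : MH G k l :=
  if h : z ∈ magCycles G l k then QuotientAddGroup.mk ⟨z, h⟩ else 0

/-- The alternating tuple `(x, y, x, y, …)` with `l + 1` entries determined by an
oriented edge `(x, y)`. -/
def altTuple {G : SimpleGraph V} (l : ℕ) (e : {p : V × V // G.Adj p.1 p.2}) :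
    Fin (l + 1) → V :=
  fun i => if (i : ℕ) % 2 = 0 then e.1.1 else e.1.2

open SimpleGraph

section Geodesics

variable {G T : SimpleGraph V}

lemma exists_adj_dist_add_one {a b : V} (h : G.dist a b ≠ 0) :
    ∃ w, G.Adj a w ∧ G.dist w b + 1 = G.dist a b := by
  obtain ⟨p, hp⟩ := exists_walk_of_dist_ne_zero h
  have hnil : ¬ p.Nil := by rw [Walk.not_nil_iff_lt_length]; omega
  refine ⟨p.snd, p.adj_snd hnil, le_antisymm ?_ ?_⟩
  · have := dist_le p.tail
    have := p.length_tail_add_one hnil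
    omega
  · have := (p.adj_snd hnil).reachable.dist_triangle_left b
    rw [dist_eq_one_iff_adj.mpr (p.adj_snd hnil)] at this
    omega

/-- The first step of a geodesic from `a` to `b`, chosen arbitrarily; junk value `a` when
`G.dist a b = 0`. -/
def stepToward (G : SimpleGraph V) (a b : V) : V :=
  if h : G.dist a b ≠ 0 then (exists_adj_dist_add_one h).choose else a

lemma adj_stepToward {a b : V} (h : G.dist a b ≠ 0) : G.Adj a (stepToward G a b) := by
  rw [stepToward, dif_pos h]
  exact (exists_adj_dist_add_one h).choose_spec.1

lemma dist_stepToward_add_one {a b : V} (h : G.dist a b ≠ 0) :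
    G.dist (stepToward G a b) b + 1 = G.dist a b := by
  rw [stepToward, dif_pos h]
  exact (exists_adj_dist_add_one h).choose_spec.2

lemma dist_stepToward_eq_one {a b : V} (h : G.dist a b ≠ 0) :
    G.dist a (stepToward G a b) = 1 :=
  dist_eq_one_iff_adj.mpr (adj_stepToward h)

/-- Geodesics in a tree are unique, hence so is their first step. -/
lemma eq_stepToward (hT : T.IsTree) {a w t : V} (hadj : T.Adj a w)
    (hd : T.dist w t + 1 = T.dist a t) : w = stepToward T a t := by
  have hat : T.dist a t ≠ 0 := by omega
  have geodesic : ∀ u, T.Adj a u → T.dist u t + 1 = T.dist a t →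
      ∃ p : T.Walk a t, p.IsPath ∧ p.snd = u := by
    intro u hu hdu
    obtain ⟨q, hq⟩ := (hT.connected u t).exists_walk_length_eq_dist
    refine ⟨.cons hu q, Walk.isPath_of_length_eq_dist _ ?_, by simp⟩
    rw [Walk.length_cons, hq, hdu]
  obtain ⟨p, hp, rfl⟩ := geodesic w hadj hd
  obtain ⟨p', hp', hsnd⟩ := geodesic _ (adj_stepToward hat) (dist_stepToward_add_one hat)
  rw [← hsnd, (hT.existsUnique_path a t).unique hp hp']

def IsBetween (G : SimpleGraph V) (a b c : V) : Prop :=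
  G.dist a c = G.dist a b + G.dist b c

lemma IsBetween.mono_right (hG : G.Connected) {a b c d : V} (habd : IsBetween G a b d)
    (hbcd : IsBetween G b c d) : IsBetween G a b c := by
  have := hG.dist_triangle (u := a) (v := c) (w := d)
  have := hG.dist_triangle (u := a) (v := b) (w := c)
  unfold IsBetween at *
  omega

lemma stepToward_eq_of_isBetween (hT : T.IsTree) {a b c : V} (h : IsBetween T a b c)
    (hab : T.dist a b ≠ 0) : stepToward T a c = stepToward T a b := by
  refine (eq_stepToward hT (adj_stepToward hab) ?_).symm
  have := dist_stepToward_add_one hab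
  have := dist_stepToward_eq_one hab
  have := hT.connected.dist_triangle (u := stepToward T a b) (v := b) (w := c)
  have := hT.connected.dist_triangle (u := a) (v := stepToward T a b) (w := c)
  unfold IsBetween at h
  omega

lemma isBetween_of_stepToward_ne (hT : T.IsTree) {a b d : V}
    (h : stepToward T b a ≠ stepToward T b d) : IsBetween T a b d := by
  obtain ⟨n, hn⟩ : ∃ n, T.dist b d = n := ⟨_, rfl⟩
  induction n generalizing b with
  | zero =>
    rw [hT.connected.dist_eq_zero_iff.mp hn, IsBetween, dist_self, add_zero]
  | succ n ih =>
    -- `w`, the next vertex toward `d`, is farther from `a`; seen from `w`, the directions to `a`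
    -- (back to `b`) and to `d` still differ.
    have hbd : T.dist b d ≠ 0 := by omega
    obtain ⟨w, hw⟩ : ∃ w, stepToward T b d = w := ⟨_, rfl⟩
    have hbw : T.Adj b w := hw ▸ adj_stepToward hbd
    have hwd : T.dist w d = n := by have := hw ▸ dist_stepToward_add_one hbd; omega
    have haw : T.dist a w = T.dist a b + 1 := by
      rcases hT.dist_eq_dist_add_one_of_adj a hbw with hab | hab
      · refine absurd (eq_stepToward hT hbw ?_).symm (hw ▸ h)
        rw [SimpleGraph.dist_comm, ← hab, SimpleGraph.dist_comm]
      · exact hab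
    have hwa : stepToward T w a = b := by
      refine (eq_stepToward hT hbw.symm ?_).symm
      rw [SimpleGraph.dist_comm, ← haw, SimpleGraph.dist_comm]
    have hwd' : stepToward T w a ≠ stepToward T w d := by
      rw [hwa]
      intro hb
      by_cases hwd0 : T.dist w d = 0
      · rw [stepToward, dif_neg (not_not.mpr hwd0)] at hb
        exact hbw.ne hb
      · have := dist_stepToward_add_one hwd0
        rw [← hb] at this
        omega
    have := ih hwd' hwd
    unfold IsBetween at this ⊢
    omega

lemma IsBetween.trans (hT : T.IsTree) {a b c d : V} (habc : IsBetween T a b c)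
    (hbcd : IsBetween T b c d) (hbc : T.dist b c ≠ 0) : IsBetween T a b d := by
  rcases eq_or_ne (T.dist b a) 0 with hba | hba
  · rw [hT.connected.dist_eq_zero_iff.mp hba, IsBetween, dist_self, zero_add]
  apply isBetween_of_stepToward_ne hT
  rw [stepToward_eq_of_isBetween hT hbcd hbc]
  intro heq
  have h1 := dist_stepToward_add_one hba
  have h2 := dist_stepToward_add_one hbc
  rw [heq] at h1
  have := hT.connected.dist_triangle (u := a) (v := stepToward T b c) (w := c)
  have := SimpleGraph.dist_comm (G := T) (u := a) (v := b)
  have := SimpleGraph.dist_comm (G := T) (u := a) (v := stepToward T b c)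
  unfold IsBetween at habc
  omega

end Geodesics

section Homology

variable {G : SimpleGraph V}

lemma mcGen_of_isMagTuple {l k : ℕ} {x : Fin (k + 1) → V} (h : IsMagTuple G l x) :
    mcGen G l x = FreeAbelianGroup.of (⟨x, h⟩ : MagTuple G k l) :=
  dif_pos h

instance {k l : ℕ} [IsEmpty (MagTuple G k l)] : Subsingleton (MC G k l) :=
  inferInstanceAs (Subsingleton (FreeAbelianGroup _))

lemma hom_ext_mcGen {A : Type*} [AddCommGroup A] {k l : ℕ} {f g : MC G k l →+ A}
    (h : ∀ x : MagTuple G k l, f (mcGen G l x.1) = g (mcGen G l x.1)) : f = g :=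
  FreeAbelianGroup.lift_ext f g fun x => by
    have := h x
    rwa [mcGen_of_isMagTuple x.2] at this

lemma apply_apply_eq_self_of_add_eq_id {A B C : Type*} [AddCommGroup A] [AddCommGroup B]
    [AddCommGroup C] {f : B →+ A} {g : A →+ B} {h : C →+ A} {d : A →+ C}
    (hid : f.comp g + h.comp d = AddMonoidHom.id A) {z : A} (hz : d z = 0) : f (g z) = z := by
  have := DFunLike.congr_fun hid z
  rwa [AddMonoidHom.add_apply, AddMonoidHom.comp_apply, AddMonoidHom.comp_apply, hz, map_zero,
    add_zero] at this

lemma subsingleton_MH_of_isEmpty {k l : ℕ} [IsEmpty (MagTuple G k l)] :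
    Subsingleton (MH G k l) :=
  QuotientAddGroup.mk_surjective.subsingleton

lemma subsingleton_MH_succ {k l : ℕ}
    (h : ∀ z ∈ magCycles G l (k + 1), z ∈ (magDiff G (k + 1) l).range) :
    Subsingleton (MH G (k + 1) l) := by
  refine subsingleton_of_forall_eq 0 fun q => ?_
  induction q using QuotientAddGroup.induction_on with
  | H z => exact (QuotientAddGroup.eq_zero_iff _).mpr (AddSubgroup.mem_addSubgroupOf.mpr (h z z.2))

lemma exists_addEquiv_MH {A : Type*} [AddCommGroup A] {k l : ℕ}
    [IsEmpty (MagTuple G (k + 1) l)] (ι : A →+ MC G k l) (π : MC G k l →+ A)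
    (hcyc : ∀ a, ι a ∈ magCycles G l k) (hπι : ∀ a, π (ι a) = a)
    (hιπ : ∀ z ∈ magCycles G l k, ι (π z) = z) :
    ∃ φ : A ≃+ MH G k l, ∀ a, φ a = mkMH G k l (ι a) := by
  let f : A →+ MH G k l := (QuotientAddGroup.mk' _).comp (ι.codRestrict _ hcyc)
  have hinj : Function.Injective f := by
    refine (injective_iff_map_eq_zero f).mpr fun a ha => ?_
    obtain ⟨w, hw⟩ := AddSubgroup.mem_addSubgroupOf.mp ((QuotientAddGroup.eq_zero_iff _).mp ha)
    have hιa : ι a = 0 := by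
      have : ι a = magDiff G k l w := hw.symm
      rw [this, Subsingleton.elim w 0, map_zero]
    rw [← hπι a, hιa, map_zero]
  have hsurj : Function.Surjective f := by
    intro q
    induction q using QuotientAddGroup.induction_on with
    | H z => exact ⟨π z, congrArg QuotientAddGroup.mk (Subtype.ext (hιπ z z.2))⟩
  exact ⟨AddEquiv.ofBijective f ⟨hinj, hsurj⟩, fun a => by
    simp only [mkMH, hcyc a, ↓reduceDIte, f]
    rfl⟩

lemma isEmpty_magTuple_zero {l : ℕ} (h : 0 < l) : IsEmpty (MagTuple G 0 l) :=
  ⟨fun x => by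
    have := x.2.2
    simp only [tupleLen, Finset.univ_eq_empty, Finset.sum_empty] at this
    exact absurd (Nat.cast_eq_zero.mp this.symm) h.ne'⟩

lemma isEmpty_magTuple_one_zero : IsEmpty (MagTuple G 1 0) := by
  refine ⟨fun ⟨x, hne, hlen⟩ => hne 0 ?_⟩
  simpa [tupleLen] using hlen

lemma isMagTuple_const (v : V) : IsMagTuple G 0 (fun _ : Fin 1 => v) :=
  ⟨fun i => i.elim0, by simp [tupleLen]⟩

theorem nonempty_addEquiv_MH_zero_zero (G : SimpleGraph V) :
    Nonempty (MH G 0 0 ≃+ FreeAbelianGroup V) := by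
  let ι : FreeAbelianGroup V →+ MC G 0 0 :=
    FreeAbelianGroup.lift fun v => mcGen G 0 (fun _ : Fin 1 => v)
  let π : MC G 0 0 →+ FreeAbelianGroup V :=
    FreeAbelianGroup.lift fun x : MagTuple G 0 0 => FreeAbelianGroup.of (x.1 0)
  have hπι : π.comp ι = AddMonoidHom.id _ := FreeAbelianGroup.lift_ext _ _ fun v => by
    simp only [AddMonoidHom.comp_apply, ι, FreeAbelianGroup.lift_apply_of,
      mcGen_of_isMagTuple (isMagTuple_const v)]
    exact FreeAbelianGroup.lift_apply_of _ _
  have hιπ : ι.comp π = AddMonoidHom.id _ := FreeAbelianGroup.lift_ext _ _ fun x => by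
    have hconst : (fun _ : Fin 1 => x.1 0) = x.1 :=
      funext fun i => congrArg x.1 (Subsingleton.elim 0 i)
    show ι (π (FreeAbelianGroup.of x)) = FreeAbelianGroup.of x
    erw [FreeAbelianGroup.lift_apply_of]
    exact (congrArg (mcGen G 0) hconst).trans (mcGen_of_isMagTuple x.2)
  have := isEmpty_magTuple_one_zero (G := G)
  obtain ⟨φ, -⟩ := exists_addEquiv_MH ι π (fun _ => trivial)
    (DFunLike.congr_fun hπι) (fun z _ => DFunLike.congr_fun hιπ z)
  exact ⟨φ.symm⟩

end Homology

lemma sum_range_add_of_skip (f g : ℕ → ℕ) {p k : ℕ} (hpk : p < k)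
    (hlt : ∀ i < p, g i = f i) (hgt : ∀ i, p < i → i < k → g i = f (i + 1)) :
    ∑ i ∈ Finset.range k, g i + f p + f (p + 1)
      = ∑ i ∈ Finset.range (k + 1), f i + g p := by
  induction k, hpk using Nat.le_induction with
  | base =>
    rw [Finset.sum_range_succ, Finset.sum_range_succ, Finset.sum_range_succ,
      Finset.sum_congr rfl fun i hi => hlt i (Finset.mem_range.mp hi)]
    ring
  | succ k hk ih =>
    specialize ih fun i hi hik => hgt i hi (by omega)
    rw [Finset.sum_range_succ, Finset.sum_range_succ (n := k + 1), hgt k hk (by omega)]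
    omega

section Tuples

variable {T : SimpleGraph V}

/-- The `m`-th entry of a tuple, with indices past the end reading the last entry: this lets
all index arithmetic below happen in `ℕ`. -/
def entry {k : ℕ} (x : Fin (k + 1) → V) (m : ℕ) : V := x ⟨min m k, by omega⟩

lemma apply_eq_entry {k : ℕ} (x : Fin (k + 1) → V) {m : ℕ} (i : Fin (k + 1))
    (h : (i : ℕ) = m) : x i = entry x m := by
  subst h
  exact congrArg x (Fin.ext (by simp [Nat.min_eq_left (Nat.lt_succ_iff.mp i.isLt)]))

lemma tuple_ext {k : ℕ} {x y : Fin (k + 1) → V} (h : ∀ n ≤ k, entry x n = entry y n) :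
    x = y := by
  funext i
  rw [apply_eq_entry x i rfl, apply_eq_entry y i rfl]
  exact h i (Nat.lt_succ_iff.mp i.isLt)

def natLen (T : SimpleGraph V) {k : ℕ} (x : Fin (k + 1) → V) : ℕ :=
  ∑ m ∈ Finset.range k, T.dist (entry x m) (entry x (m + 1))

lemma tupleLen_eq_natLen (hT : T.Connected) {k : ℕ} (x : Fin (k + 1) → V) :
    tupleLen T x = natLen T x := by
  rw [tupleLen, natLen, ← Fin.sum_univ_eq_sum_range, Nat.cast_sum]
  refine Finset.sum_congr rfl fun i _ => ?_
  rw [SimpleGraph.dist, ENat.natCast_toNat (edist_ne_top_iff_reachable.mpr (hT _ _)),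
    apply_eq_entry x i.castSucc rfl, apply_eq_entry x i.succ rfl]
  rfl

lemma isMagTuple_iff (hT : T.Connected) {l k : ℕ} (x : Fin (k + 1) → V) :
    IsMagTuple T l x ↔
      (∀ m, 1 ≤ m → m ≤ k → entry x (m - 1) ≠ entry x m) ∧ natLen T x = l := by
  rw [IsMagTuple, tupleLen_eq_natLen hT, Nat.cast_inj]
  refine and_congr_left fun _ => ⟨fun hd m h1 h2 => ?_, fun hd i => ?_⟩
  · have := hd ⟨m - 1, by omega⟩
    rwa [apply_eq_entry x _ (m := m - 1) rfl, apply_eq_entry x _ (m := m) (by simp; omega)]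
      at this
  · rw [apply_eq_entry x i.castSucc rfl, apply_eq_entry x i.succ rfl]
    exact hd (i + 1) (by omega) (by omega)

lemma one_le_dist_entry (hT : T.Connected) {l k : ℕ} {x : Fin (k + 1) → V}
    (hx : IsMagTuple T l x) {m : ℕ} (h1 : 1 ≤ m) (h2 : m ≤ k) :
    1 ≤ T.dist (entry x (m - 1)) (entry x m) :=
  hT.pos_dist_of_ne (((isMagTuple_iff hT x).mp hx).1 m h1 h2)

lemma le_natLen (hT : T.Connected) {l k : ℕ} {x : Fin (k + 1) → V} (hx : IsMagTuple T l x) :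
    k ≤ natLen T x := by
  calc k = ∑ _m ∈ Finset.range k, 1 := by simp
    _ ≤ natLen T x := Finset.sum_le_sum fun m hm =>
      one_le_dist_entry hT hx (m := m + 1) (by omega) (by simp at hm; omega)

lemma dist_entry_eq_one (hT : T.Connected) {k : ℕ} {x : Fin (k + 1) → V}
    (hx : IsMagTuple T k x) {m : ℕ} (h1 : 1 ≤ m) (h2 : m ≤ k) :
    T.dist (entry x (m - 1)) (entry x m) = 1 := by
  refine le_antisymm ?_ (one_le_dist_entry hT hx h1 h2)
  by_contra! hlong
  have hlen := ((isMagTuple_iff hT x).mp hx).2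
  have : ∑ _m ∈ Finset.range k, 1 < natLen T x := by
    refine Finset.sum_lt_sum (fun i hi => ?_) ⟨m - 1, by simp; omega, ?_⟩
    · exact one_le_dist_entry hT hx (m := i + 1) (by omega) (by simp at hi; omega)
    · rwa [Nat.sub_add_cancel h1]
  rw [Finset.sum_const, Finset.card_range, smul_eq_mul, mul_one] at this
  omega

def face {k : ℕ} (x : Fin (k + 2) → V) (m : ℕ) : Fin (k + 1) → V :=
  x ∘ Fin.succAbove ⟨min m (k + 1), by omega⟩

lemma entry_face {k : ℕ} (x : Fin (k + 2) → V) {m n : ℕ} (hm : m ≤ k + 1) (hn : n ≤ k) :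
    entry (face x m) n = if n < m then entry x n else entry x (n + 1) := by
  unfold face entry
  simp only [Function.comp_apply]
  rw [apply_eq_entry x _ (m := if n < m then n else n + 1)]
  · split_ifs <;> rfl
  · rw [Fin.succAbove]
    split_ifs <;> simp_all [Fin.lt_def]

def insertAt {k : ℕ} (x : Fin (k + 1) → V) (j : ℕ) (y : V) : Fin (k + 2) → V :=
  fun n => if (n : ℕ) < j then entry x n else if (n : ℕ) = j then y else entry x (n - 1)

lemma entry_insertAt {k : ℕ} (x : Fin (k + 1) → V) {j : ℕ} (y : V) {n : ℕ}
    (hn : n ≤ k + 1) :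
    entry (insertAt x j y) n
      = if n < j then entry x n else if n = j then y else entry x (n - 1) := by
  simp only [entry, insertAt, Nat.min_eq_left hn]

lemma face_insertAt {k : ℕ} (x : Fin (k + 1) → V) {j : ℕ} (hj : j ≤ k + 1) (y : V) :
    face (insertAt x j y) j = x := by
  refine tuple_ext fun n hn => ?_
  rw [entry_face _ hj hn, entry_insertAt x y (by omega), entry_insertAt x y (by omega)]
  split_ifs <;> first | rfl | omega

lemma insertAt_face {k : ℕ} (x : Fin (k + 2) → V) {j : ℕ} (hj : j ≤ k + 1) :
    insertAt (face x j) j (entry x j) = x := by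
  refine tuple_ext fun n hn => ?_
  rw [entry_insertAt _ _ hn]
  split_ifs with h1 h2
  · rw [entry_face x hj (by omega), if_pos h1]
  · rw [h2]
  · rw [entry_face x hj (by omega), if_neg (by omega)]
    exact congrArg (entry x) (by omega)

lemma face_insertAt_of_lt {k : ℕ} (x : Fin (k + 2) → V) {j q : ℕ} (y : V)
    (hq : j < q) (hqk : q ≤ k + 2) :
    face (insertAt x j y) q = insertAt (face x (q - 1)) j y := by
  refine tuple_ext fun n hn => ?_
  rw [entry_face _ hqk hn, entry_insertAt _ y hn]
  by_cases hnq : n < q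
  · rw [if_pos hnq, entry_insertAt x y (by omega)]
    split_ifs <;> first | rfl | rw [entry_face x (by omega) (by omega), if_pos (by omega)]
  · rw [if_neg hnq, entry_insertAt x y (by omega), if_neg (by omega), if_neg (by omega),
      if_neg (by omega), if_neg (by omega), entry_face x (by omega) (by omega), if_neg (by omega)]
    exact congrArg (entry x) (by omega)

lemma natLen_face (T : SimpleGraph V) {k : ℕ} (x : Fin (k + 2) → V) {m : ℕ}
    (h1 : 1 ≤ m) (h2 : m ≤ k) :
    natLen T (face x m) + T.dist (entry x (m - 1)) (entry x m)
        + T.dist (entry x m) (entry x (m + 1))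
      = natLen T x + T.dist (entry x (m - 1)) (entry x (m + 1)) := by
  have key := sum_range_add_of_skip (fun i => T.dist (entry x i) (entry x (i + 1)))
    (fun i => T.dist (entry (face x m) i) (entry (face x m) (i + 1))) (p := m - 1) (k := k)
    (by omega)
    (fun i hi => by
      rw [entry_face x (by omega) (by omega), entry_face x (by omega) (by omega),
        if_pos (by omega), if_pos (by omega)])
    (fun i hi hik => by
      rw [entry_face x (by omega) (by omega), entry_face x (by omega) (by omega),
        if_neg (by omega), if_neg (by omega)])
  simp only [Nat.sub_add_cancel h1] at key
  rw [entry_face x (by omega) (by omega), entry_face x (by omega) (by omega),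
    if_pos (by omega), if_neg (by omega)] at key
  exact key

def IsLongStep (T : SimpleGraph V) {k : ℕ} (x : Fin (k + 1) → V) (m : ℕ) : Prop :=
  1 ≤ m ∧ m ≤ k ∧ 2 ≤ T.dist (entry x (m - 1)) (entry x m)

/-- The positions at which the face `∂_m` of a generator does not vanish. -/
def IsRemovable (T : SimpleGraph V) {k : ℕ} (x : Fin (k + 1) → V) (m : ℕ) : Prop :=
  1 ≤ m ∧ m + 1 ≤ k ∧ IsBetween T (entry x (m - 1)) (entry x m) (entry x (m + 1))

def IsCritical (T : SimpleGraph V) {k : ℕ} (x : Fin (k + 1) → V) (m : ℕ) : Prop :=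
  IsLongStep T x m ∨ IsRemovable T x m

def IsFirstCritical (T : SimpleGraph V) {k : ℕ} (x : Fin (k + 1) → V) (j : ℕ) : Prop :=
  IsCritical T x j ∧ ∀ p < j, ¬ IsCritical T x p

lemma exists_isFirstCritical {k : ℕ} {x : Fin (k + 1) → V} (h : ∃ m, IsCritical T x m) :
    ∃ j, IsFirstCritical T x j :=
  ⟨Nat.find h, Nat.find_spec h, fun _ => Nat.find_min h⟩

lemma IsFirstCritical.one_le {k : ℕ} {x : Fin (k + 1) → V} {j : ℕ}
    (h : IsFirstCritical T x j) : 1 ≤ j :=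
  h.1.elim (·.1) (·.1)

def subdivide (T : SimpleGraph V) {k : ℕ} (x : Fin (k + 1) → V) (j : ℕ) : Fin (k + 2) → V :=
  insertAt x j (stepToward T (entry x (j - 1)) (entry x j))

lemma isMagTuple_face (hT : T.Connected) {l k : ℕ} {x : Fin (k + 2) → V}
    (hx : IsMagTuple T l x) {m : ℕ} (hr : IsRemovable T x m) : IsMagTuple T l (face x m) := by
  obtain ⟨h1, h2, hb⟩ := hr
  obtain ⟨hd, hl⟩ := (isMagTuple_iff hT x).mp hx
  refine (isMagTuple_iff hT _).mpr ⟨fun p hp1 hp2 => ?_, ?_⟩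
  · rw [entry_face x (by omega) (by omega), entry_face x (by omega) (by omega)]
    rcases Nat.lt_trichotomy p m with h | rfl | h
    · rw [if_pos (by omega), if_pos h]
      exact hd p hp1 (by omega)
    · rw [if_pos (by omega), if_neg (lt_irrefl p)]
      intro heq
      have := one_le_dist_entry hT hx h1 (by omega)
      unfold IsBetween at hb
      rw [heq] at hb this
      rw [dist_self] at hb
      omega
    · rw [if_neg (by omega), if_neg (by omega), Nat.sub_add_cancel hp1]
      exact hd (p + 1) (by omega) (by omega)
  · have := natLen_face T x h1 (by omega)
    unfold IsBetween at hb
    omega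

lemma mcGen_face_eq_zero (hT : T.Connected) {l k : ℕ} {x : Fin (k + 2) → V}
    (hx : IsMagTuple T l x) {m : ℕ} (h1 : 1 ≤ m) (h2 : m ≤ k) (hr : ¬ IsRemovable T x m) :
    mcGen T l (face x m) = 0 := by
  refine dif_neg fun hface => hr ⟨h1, by omega, ?_⟩
  have := hT.dist_triangle (u := entry x (m - 1)) (v := entry x m) (w := entry x (m + 1))
  have := natLen_face T x h1 h2
  have := ((isMagTuple_iff hT _).mp hface).2
  have := ((isMagTuple_iff hT _).mp hx).2
  unfold IsBetween
  omega

lemma isMagTuple_subdivide (hT : T.Connected) {l k : ℕ} {x : Fin (k + 1) → V}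
    (hx : IsMagTuple T l x) {j : ℕ} (hlong : IsLongStep T x j) :
    IsMagTuple T l (subdivide T x j) := by
  obtain ⟨hj1, hj2, hjd⟩ := hlong
  have hdn : T.dist (entry x (j - 1)) (entry x j) ≠ 0 := by omega
  have hadj := adj_stepToward hdn
  have hdy := dist_stepToward_add_one hdn
  unfold subdivide
  generalize stepToward T (entry x (j - 1)) (entry x j) = y at hadj hdy ⊢
  obtain ⟨hd, hl⟩ := (isMagTuple_iff hT x).mp hx
  have hlen := natLen_face T (insertAt x j y) hj1 hj2
  rw [face_insertAt x (by omega) y, entry_insertAt x y (by omega), if_pos (by omega),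
    entry_insertAt x y (by omega), if_neg (lt_irrefl j), if_pos rfl,
    entry_insertAt x y (by omega), if_neg (by omega), if_neg (by omega), Nat.add_sub_cancel,
    dist_eq_one_iff_adj.mpr hadj] at hlen
  refine (isMagTuple_iff hT _).mpr ⟨fun p hp1 hp2 => ?_, by omega⟩
  rw [entry_insertAt x y (by omega), entry_insertAt x y (by omega)]
  rcases Nat.lt_trichotomy p j with h | rfl | h
  · rw [if_pos (by omega), if_pos h]
    exact hd p hp1 (by omega)
  · rw [if_pos (by omega), if_neg (lt_irrefl p), if_pos rfl]
    exact hadj.ne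
  · rw [if_neg (show ¬ p - 1 < j by omega), if_neg (show ¬ p < j by omega),
      if_neg (show p ≠ j by omega)]
    rcases eq_or_ne (p - 1) j with h' | h'
    · rw [if_pos h', h']
      intro heq
      rw [heq, dist_self] at hdy
      omega
    · rw [if_neg h']
      exact hd (p - 1) (by omega) (by omega)

lemma magDiff_mcGen {l k : ℕ} {x : Fin (k + 2) → V} (hx : IsMagTuple T l x) :
    magDiff T k l (mcGen T l x)
      = ∑ m ∈ Finset.range k, ((-1 : ℤ) ^ (m + 1)) • mcGen T l (face x (m + 1)) := by
  rw [mcGen_of_isMagTuple hx, magDiff]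
  erw [FreeAbelianGroup.lift_apply_of]
  rw [← Fin.sum_univ_eq_sum_range
    (fun m => ((-1 : ℤ) ^ (m + 1)) • mcGen T l (face x (m + 1)))]
  refine Finset.sum_congr rfl fun i _ => ?_
  rw [face]
  congr 4
  exact Fin.ext (by simp)

lemma not_isCritical_face {k : ℕ} {x : Fin (k + 2) → V} {p q : ℕ}
    (hq : ¬ IsCritical T x q) (hqp : q + 1 < p) (hp : p ≤ k + 1) :
    ¬ IsCritical T (face x p) q := by
  rintro (⟨h1, h2, h3⟩ | ⟨h1, h2, h3⟩)
  · rw [entry_face x hp (by omega), entry_face x hp (by omega),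
      if_pos (by omega), if_pos (by omega)] at h3
    exact hq (Or.inl ⟨h1, by omega, h3⟩)
  · rw [entry_face x hp (by omega), entry_face x hp (by omega), entry_face x hp (by omega),
      if_pos (by omega), if_pos (by omega), if_pos (by omega)] at h3
    exact hq (Or.inr ⟨h1, by omega, h3⟩)

lemma isLongStep_face_iff {k : ℕ} {x : Fin (k + 2) → V} {j m : ℕ} (hjm : j < m)
    (hm : m ≤ k + 1) : IsLongStep T (face x m) j ↔ IsLongStep T x j := by
  unfold IsLongStep
  rw [entry_face x hm (by omega), entry_face x hm (by omega), if_pos (by omega),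
    if_pos (by omega)]
  omega

lemma isLongStep_face_self (hT : T.Connected) {l k : ℕ} {x : Fin (k + 2) → V}
    (hx : IsMagTuple T l x) {j : ℕ} (hr : IsRemovable T x j) :
    IsLongStep T (face x j) j := by
  obtain ⟨h1, h2, hb⟩ := hr
  refine ⟨h1, by omega, ?_⟩
  rw [entry_face x (by omega) (by omega), entry_face x (by omega) (by omega),
    if_pos (by omega), if_neg (lt_irrefl j), hb]
  have := one_le_dist_entry hT hx h1 (by omega)
  have := one_le_dist_entry hT hx (m := j + 1) (by omega) (by omega)
  rw [Nat.add_sub_cancel] at this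
  omega

lemma isFirstCritical_face (hT : T.IsTree) {l k : ℕ} {x : Fin (k + 2) → V}
    (hx : IsMagTuple T l x) {j m : ℕ} (hj : IsFirstCritical T x j) (hjm : j ≤ m)
    (hr : IsRemovable T x m) : IsFirstCritical T (face x m) j := by
  obtain ⟨hm1, hmk, hbm⟩ := hr
  rcases hjm.lt_or_eq with hjm | rfl
  · refine ⟨?_, fun q hq => not_isCritical_face (hj.2 q hq) (by omega) (by omega)⟩
    rcases hj.1 with hlong | ⟨h1, h2, hb⟩
    · exact Or.inl ((isLongStep_face_iff hjm (by omega)).mpr hlong)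
    refine Or.inr ⟨h1, by omega, ?_⟩
    rw [entry_face x (by omega) (by omega), entry_face x (by omega) (by omega),
      entry_face x (by omega) (by omega), if_pos (by omega), if_pos (by omega)]
    split_ifs with hlt
    · exact hb
    · obtain rfl : m = j + 1 := by omega
      have hstep := one_le_dist_entry hT.connected hx (m := j + 1) (by omega) (by omega)
      rw [Nat.add_sub_cancel] at hstep hbm
      exact hb.trans hT hbm (by omega)
  refine ⟨Or.inl (isLongStep_face_self hT.connected hx ⟨hm1, hmk, hbm⟩), fun q hq => ?_⟩
  rcases Nat.lt_or_ge (q + 1) j with hq' | hq'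
  · exact not_isCritical_face (hj.2 q hq) hq' (by omega)
  obtain rfl : q = j - 1 := by omega
  rintro (⟨h1, h2, h3⟩ | ⟨h1, h2, h3⟩)
  · rw [entry_face x (by omega) (by omega), entry_face x (by omega) (by omega),
      if_pos (by omega), if_pos (by omega)] at h3
    exact hj.2 _ hq (Or.inl ⟨h1, by omega, h3⟩)
  · rw [entry_face x (by omega) (by omega), entry_face x (by omega) (by omega),
      entry_face x (by omega) (by omega), if_pos (by omega), if_pos (by omega),
      if_neg (by omega), Nat.sub_add_cancel hj.one_le] at h3
    refine hj.2 _ hq (Or.inr ⟨h1, by omega, ?_⟩)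
    rw [Nat.sub_add_cancel hj.one_le]
    exact h3.mono_right hT.connected hbm

lemma subdivide_face (hT : T.IsTree) {l k : ℕ} {x : Fin (k + 2) → V} (hx : IsMagTuple T l x)
    {j m : ℕ} (hj : 1 ≤ j) (hjm : j ≤ m) (hr : IsRemovable T x m) :
    subdivide T (face x m) j = face (subdivide T x j) (m + 1) := by
  have hmk := hr.2.1
  rw [subdivide, subdivide, face_insertAt_of_lt _ _ (by omega) (by omega), Nat.add_sub_cancel,
    entry_face x (by omega) (by omega), entry_face x (by omega) (by omega), if_pos (by omega)]
  split_ifs with hlt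
  · rfl
  · obtain rfl : m = j := by omega
    have hstep := one_le_dist_entry hT.connected hx hj (by omega)
    rw [stepToward_eq_of_isBetween hT hr.2.2 (by omega)]

lemma not_isRemovable_subdivide (hT : T.IsTree) {k : ℕ} {x : Fin (k + 2) → V} {j q : ℕ}
    (hmin : ∀ p < j, ¬ IsCritical T x p) (hlong : IsLongStep T x j) (hq : q < j) :
    ¬ IsRemovable T (subdivide T x j) q := by
  obtain ⟨hj1, hjk, hjd⟩ := hlong
  have hdj : T.dist (entry x (j - 1)) (entry x j) ≠ 0 := by omega
  have hadj := dist_stepToward_eq_one hdj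
  have hdy := dist_stepToward_add_one hdj
  rintro ⟨hq1, hq2, hb⟩
  rw [subdivide, entry_insertAt _ _ (by omega), entry_insertAt _ _ (by omega),
    entry_insertAt _ _ (by omega), if_pos (by omega), if_pos hq] at hb
  split_ifs at hb with hlt hq'
  · exact hmin q hq (Or.inr ⟨hq1, by omega, hb⟩)
  · obtain rfl : q = j - 1 := by omega
    have hyb : IsBetween T (entry x (j - 1)) (stepToward T (entry x (j - 1)) (entry x j))
        (entry x j) := by
      unfold IsBetween
      omega
    refine hmin (j - 1) hq (Or.inr ⟨hq1, by omega, ?_⟩)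
    rw [Nat.sub_add_cancel hj1]
    exact hb.trans hT hyb (by omega)
  · omega

lemma isRemovable_subdivide_succ_iff (hT : T.IsTree) {k : ℕ} {x : Fin (k + 2) → V} {j m : ℕ}
    (hlong : IsLongStep T x j) (hjm : j ≤ m) (hm : m ≤ k) :
    IsRemovable T (subdivide T x j) (m + 1) ↔ IsRemovable T x m := by
  obtain ⟨hj1, hjk, hjd⟩ := hlong
  have hdj : T.dist (entry x (j - 1)) (entry x j) ≠ 0 := by omega
  have entry_succ : ∀ n, j < n → n ≤ k + 2 → entry (subdivide T x j) n = entry x (n - 1) :=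
    fun n hjn hn => by rw [subdivide, entry_insertAt _ _ hn, if_neg (by omega), if_neg (by omega)]
  have entry_self : entry (subdivide T x j) j = stepToward T (entry x (j - 1)) (entry x j) := by
    rw [subdivide, entry_insertAt _ _ (by omega), if_neg (lt_irrefl j), if_pos rfl]
  unfold IsRemovable
  rw [entry_succ (m + 1) (by omega) (by omega), entry_succ (m + 1 + 1) (by omega) (by omega),
    Nat.add_sub_cancel, Nat.add_sub_cancel]
  rcases hjm.lt_or_eq with hjm | rfl
  · rw [entry_succ m hjm (by omega)]
    exact and_congr (by omega) (and_congr (by omega) Iff.rfl)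
  rw [entry_self]
  have hadj := dist_stepToward_eq_one hdj
  have hdy := dist_stepToward_add_one hdj
  have hyj : IsBetween T (entry x (j - 1)) (stepToward T (entry x (j - 1)) (entry x j))
      (entry x j) := by
    unfold IsBetween
    omega
  refine ⟨fun ⟨_, _, hb⟩ => ⟨hj1, by omega, ?_⟩,
    fun ⟨_, _, hb⟩ => ⟨by omega, by omega, ?_⟩⟩
  · have := (hyj.trans hT hb (by omega))
    unfold IsBetween at this hb ⊢
    omega
  · have := hT.connected.dist_triangle (u := stepToward T (entry x (j - 1)) (entry x j))
      (v := entry x j) (w := entry x (j + 1))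
    have := hT.connected.dist_triangle (u := entry x (j - 1))
      (v := stepToward T (entry x (j - 1)) (entry x j)) (w := entry x (j + 1))
    unfold IsBetween at hb ⊢
    omega

lemma mcGen_face_eq_zero_of_lt (hT : T.Connected) {l k : ℕ} {x : Fin (k + 2) → V}
    (hx : IsMagTuple T l x) {j m : ℕ} (hmin : ∀ p < j, ¬ IsCritical T x p) (h1 : 1 ≤ m)
    (hmj : m < j) (hm : m ≤ k) : mcGen T l (face x m) = 0 :=
  mcGen_face_eq_zero hT hx h1 hm fun hr => hmin m hmj (Or.inr hr)

end Tuples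

section Contraction

variable {T : SimpleGraph V}

/-- The sign makes the `j`-th face of the subdivision equal to `+x`. -/
def contractionTuple (T : SimpleGraph V) (l : ℕ) {k : ℕ} (x : Fin (k + 1) → V) :
    MC T (k + 1) l :=
  if h : ∃ m, IsCritical T x m then
    if IsLongStep T x (Nat.find h) then
      ((-1 : ℤ) ^ Nat.find h) • mcGen T l (subdivide T x (Nat.find h))
    else 0
  else 0

def contraction (T : SimpleGraph V) (l k : ℕ) : MC T k l →+ MC T (k + 1) l :=
  FreeAbelianGroup.lift fun x => contractionTuple T l x.1

lemma contraction_mcGen {l k : ℕ} {x : Fin (k + 1) → V} (hx : IsMagTuple T l x) {j : ℕ}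
    (hj : IsFirstCritical T x j) :
    contraction T l k (mcGen T l x)
      = if IsLongStep T x j then ((-1 : ℤ) ^ j) • mcGen T l (subdivide T x j) else 0 := by
  have h : ∃ m, IsCritical T x m := ⟨j, hj.1⟩
  rw [mcGen_of_isMagTuple hx, contraction]
  erw [FreeAbelianGroup.lift_apply_of]
  rw [contractionTuple, dif_pos h, (Nat.find_eq_iff h).mpr hj]

lemma contraction_mcGen_of_isLongStep {l k : ℕ} {x : Fin (k + 1) → V} (hx : IsMagTuple T l x)
    {j : ℕ} (hj : IsFirstCritical T x j) (hlong : IsLongStep T x j) :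
    contraction T l k (mcGen T l x) = ((-1 : ℤ) ^ j) • mcGen T l (subdivide T x j) := by
  rw [contraction_mcGen hx hj, if_pos hlong]

lemma contraction_mcGen_of_not_isLongStep {l k : ℕ} {x : Fin (k + 1) → V}
    (hx : IsMagTuple T l x) {j : ℕ} (hj : IsFirstCritical T x j) (hlong : ¬ IsLongStep T x j) :
    contraction T l k (mcGen T l x) = 0 := by
  rw [contraction_mcGen hx hj, if_neg hlong]

lemma contraction_mcGen_face_of_isLongStep (hT : T.IsTree) {l k : ℕ} {x : Fin (k + 2) → V}
    (hx : IsMagTuple T l x) {j m : ℕ} (hj : IsFirstCritical T x j) (hlong : IsLongStep T x j)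
    (hjm : j ≤ m) (hm : m ≤ k) :
    contraction T l k (mcGen T l (face x m))
      = ((-1 : ℤ) ^ j) • mcGen T l (face (subdivide T x j) (m + 1)) := by
  by_cases hr : IsRemovable T x m
  · have hlong' : IsLongStep T (face x m) j := by
      rcases hjm.lt_or_eq with hjm | rfl
      · exact (isLongStep_face_iff hjm (by omega)).mpr hlong
      · exact isLongStep_face_self hT.connected hx hr
    rw [contraction_mcGen_of_isLongStep (isMagTuple_face hT.connected hx hr)
      (isFirstCritical_face hT hx hj hjm hr) hlong', subdivide_face hT hx hj.one_le hjm hr]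
  · have hface := mcGen_face_eq_zero hT.connected (isMagTuple_subdivide hT.connected hx hlong)
      (m := m + 1) (by omega) (by omega) (mt (isRemovable_subdivide_succ_iff hT hlong hjm hm).mp hr)
    rw [mcGen_face_eq_zero hT.connected hx (hj.one_le.trans hjm) hm hr, map_zero, hface, smul_zero]

lemma contraction_mcGen_face_self (hT : T.IsTree) {l k : ℕ} {x : Fin (k + 2) → V}
    (hx : IsMagTuple T l x) {j : ℕ} (hj : IsFirstCritical T x j) (hlong : ¬ IsLongStep T x j) :
    contraction T l k (mcGen T l (face x j)) = ((-1 : ℤ) ^ j) • mcGen T l x := by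
  have hr : IsRemovable T x j := hj.1.resolve_left hlong
  have hjk := hr.2.1
  have hstep : T.dist (entry x (j - 1)) (entry x j) = 1 := by
    have := one_le_dist_entry hT.connected hx hj.one_le (by omega)
    exact le_antisymm (not_lt.mp fun h => hlong ⟨hj.one_le, by omega, h⟩) this
  have hy : entry x j = stepToward T (entry x (j - 1)) (entry x j) :=
    eq_stepToward hT (dist_eq_one_iff_adj.mp hstep) (by rw [SimpleGraph.dist_self, hstep])
  rw [contraction_mcGen_of_isLongStep (isMagTuple_face hT.connected hx hr)
    (isFirstCritical_face hT hx hj le_rfl hr) (isLongStep_face_self hT.connected hx hr),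
    subdivide_face hT hx hj.one_le le_rfl hr, subdivide, ← hy,
    face_insertAt_of_lt _ _ (by omega) (by omega), Nat.add_sub_cancel, insertAt_face _ (by omega)]

lemma contraction_mcGen_face_of_lt (hT : T.IsTree) {l k : ℕ} {x : Fin (k + 2) → V}
    (hx : IsMagTuple T l x) {j m : ℕ} (hj : IsFirstCritical T x j) (hlong : ¬ IsLongStep T x j)
    (hjm : j < m) (hm : m ≤ k) : contraction T l k (mcGen T l (face x m)) = 0 := by
  by_cases hr : IsRemovable T x m
  · exact contraction_mcGen_of_not_isLongStep (isMagTuple_face hT.connected hx hr)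
      (isFirstCritical_face hT hx hj hjm.le hr) (mt (isLongStep_face_iff hjm (by omega)).mp hlong)
  · rw [mcGen_face_eq_zero hT.connected hx (by omega) hm hr, map_zero]

lemma zsmul_mcGen_face_subdivide (hT : T.IsTree) {l k : ℕ} {x : Fin (k + 2) → V}
    (hx : IsMagTuple T l x) {j : ℕ} (hj : IsFirstCritical T x j) (hlong : IsLongStep T x j)
    {m : ℕ} (hm : m ≤ k) :
    ((-1 : ℤ) ^ j) • ((-1 : ℤ) ^ (m + 1)) • mcGen T l (face (subdivide T x j) (m + 1))
      = (if m + 1 = j then mcGen T l x else 0)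
        - if 1 ≤ m then ((-1 : ℤ) ^ m) • contraction T l k (mcGen T l (face x m)) else 0 := by
  have hjk := hlong.2.1
  have hj1 := hj.one_le
  have below : 1 ≤ m → m < j → mcGen T l (face x m) = 0 := fun h1 hmj =>
    mcGen_face_eq_zero_of_lt hT.connected hx hj.2 h1 hmj (by omega)
  rcases Nat.lt_trichotomy (m + 1) j with hmj | hmj | hmj
  · rw [mcGen_face_eq_zero hT.connected (isMagTuple_subdivide hT.connected hx hlong) (by omega)
      (by omega) (not_isRemovable_subdivide hT hj.2 hlong hmj), if_neg hmj.ne]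
    split_ifs with h1
    · rw [below h1 (by omega), map_zero, smul_zero, smul_zero, smul_zero, sub_zero]
    · rw [smul_zero, smul_zero, sub_zero]
  · rw [hmj, subdivide, face_insertAt _ (by omega), smul_smul, ← pow_add,
      Even.neg_one_pow ⟨j, rfl⟩, one_smul, if_pos rfl]
    split_ifs with h1
    · rw [below h1 (by omega), map_zero, smul_zero, sub_zero]
    · rw [sub_zero]
  · rw [if_neg hmj.ne', if_pos (by omega), contraction_mcGen_face_of_isLongStep hT hx hj hlong
      (by omega) hm, smul_comm, pow_succ, mul_neg_one, neg_smul, zero_sub]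

theorem magDiff_contraction_add_contraction_magDiff (hT : T.IsTree) {l k : ℕ}
    {x : Fin (k + 2) → V} (hx : IsMagTuple T l x) (hc : ∃ m, IsCritical T x m) :
    magDiff T (k + 1) l (contraction T l (k + 1) (mcGen T l x))
      + contraction T l k (magDiff T k l (mcGen T l x)) = mcGen T l x := by
  obtain ⟨j, hj⟩ := exists_isFirstCritical hc
  have hj1 := hj.one_le
  have hjk : j ≤ k + 1 := hj.1.elim (·.2.1) fun h => by have := h.2.1; omega
  have hu : contraction T l k (magDiff T k l (mcGen T l x))
      = ∑ m ∈ Finset.range k,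
          ((-1 : ℤ) ^ (m + 1)) • contraction T l k (mcGen T l (face x (m + 1))) := by
    rw [magDiff_mcGen hx, map_sum]
    simp only [map_zsmul]
  rw [hu]
  by_cases hlong : IsLongStep T x j
  · have hx' : ∑ m ∈ Finset.range (k + 1), (if m + 1 = j then mcGen T l x else 0)
        = mcGen T l x := by
      rw [Finset.sum_eq_single_of_mem (j - 1) (by simp; omega) fun m _ hm => if_neg (by omega),
        if_pos (by omega)]
    have hshift : ∑ m ∈ Finset.range (k + 1),
        (if 1 ≤ m then ((-1 : ℤ) ^ m) • contraction T l k (mcGen T l (face x m)) else 0)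
        = ∑ m ∈ Finset.range k,
          ((-1 : ℤ) ^ (m + 1)) • contraction T l k (mcGen T l (face x (m + 1))) := by
      rw [Finset.sum_range_succ', if_neg (by omega), add_zero]
      exact Finset.sum_congr rfl fun m _ => if_pos (by omega)
    rw [contraction_mcGen_of_isLongStep hx hj hlong, map_zsmul,
      magDiff_mcGen (isMagTuple_subdivide hT.connected hx hlong), Finset.smul_sum,
      Finset.sum_congr rfl fun m hm => zsmul_mcGen_face_subdivide hT hx hj hlong
        (Nat.lt_succ_iff.mp (Finset.mem_range.mp hm)),
      Finset.sum_sub_distrib, hx', hshift, sub_add_cancel]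
  · rw [contraction_mcGen_of_not_isLongStep hx hj hlong, map_zero, zero_add,
      Finset.sum_eq_single (j - 1)]
    · rw [Nat.sub_add_cancel hj.one_le, contraction_mcGen_face_self hT hx hj hlong, smul_smul,
        ← pow_add, Even.neg_one_pow ⟨j, rfl⟩, one_smul]
    · intro m hm hmj
      rcases Nat.lt_or_gt_of_ne hmj with hlt | hgt
      · rw [mcGen_face_eq_zero_of_lt hT.connected hx hj.2 (by omega) (by omega)
          (by simp at hm; omega), map_zero, smul_zero]
      · rw [contraction_mcGen_face_of_lt hT hx hj hlong (by omega) (by simp at hm; omega),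
          smul_zero]
    · intro hj'
      have := (hj.1.resolve_left hlong).2.1
      exact absurd (Finset.mem_range.mpr (by omega)) hj'

lemma exists_isCritical (hT : T.Connected) {l k : ℕ} {x : Fin (k + 2) → V}
    (hx : IsMagTuple T l x) (hl : l ≠ k + 1) : ∃ m, IsCritical T x m := by
  by_contra! h
  have hstep : ∀ i ∈ Finset.range (k + 1), T.dist (entry x i) (entry x (i + 1)) = 1 := by
    intro i hi
    have hi : i ≤ k := Nat.lt_succ_iff.mp (Finset.mem_range.mp hi)
    have hpos := one_le_dist_entry hT hx (m := i + 1) (by omega) (by omega)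
    have hshort : ¬ 2 ≤ T.dist (entry x i) (entry x (i + 1)) := fun h2 =>
      h (i + 1) (Or.inl ⟨by omega, by omega, by rwa [Nat.add_sub_cancel]⟩)
    rw [Nat.add_sub_cancel] at hpos
    omega
  refine hl ?_
  rw [← ((isMagTuple_iff hT x).mp hx).2, natLen, Finset.sum_congr rfl hstep]
  simp

lemma magDiff_mcGen_eq_zero (hT : T.Connected) {l k : ℕ} {x : Fin (k + 2) → V}
    (hx : IsMagTuple T l x) (h : ∀ m, ¬ IsRemovable T x m) :
    magDiff T k l (mcGen T l x) = 0 := by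
  rw [magDiff_mcGen hx]
  refine Finset.sum_eq_zero fun m hm => ?_
  rw [mcGen_face_eq_zero hT hx (by omega) (by simp at hm; omega) (h _), smul_zero]

end Contraction

section TopDegree

variable {T : SimpleGraph V}

def IsAlternating {k : ℕ} (x : Fin (k + 1) → V) : Prop :=
  ∀ m, 1 ≤ m → m + 1 ≤ k → entry x (m - 1) = entry x (m + 1)

lemma exists_isRemovable_of_not_isAlternating (hT : T.IsTree) {k : ℕ} {x : Fin (k + 2) → V}
    (hx : IsMagTuple T (k + 1) x) (hna : ¬ IsAlternating x) : ∃ m, IsRemovable T x m := by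
  unfold IsAlternating at hna
  push Not at hna
  obtain ⟨m, h1, h2, hne⟩ := hna
  refine ⟨m, h1, h2, ?_⟩
  have s1 := dist_entry_eq_one hT.connected hx h1 (by omega)
  have s2 := dist_entry_eq_one hT.connected hx (m := m + 1) (by omega) (by omega)
  rw [Nat.add_sub_cancel] at s2
  have hne1 := hT.dist_ne_of_adj (entry x (m + 1)) (dist_eq_one_iff_adj.mp s1)
  have hne0 := hT.connected.pos_dist_of_ne hne
  have := hT.connected.dist_triangle (u := entry x (m - 1)) (v := entry x m) (w := entry x (m + 1))
  rw [SimpleGraph.dist_comm (u := entry x (m + 1)) (v := entry x m), s2,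
    SimpleGraph.dist_comm] at hne1
  unfold IsBetween
  omega

lemma not_isRemovable_of_isAlternating (hT : T.Connected) {l k : ℕ} {x : Fin (k + 1) → V}
    (hx : IsMagTuple T l x) (ha : IsAlternating x) (m : ℕ) : ¬ IsRemovable T x m := by
  rintro ⟨h1, h2, hb⟩
  have := one_le_dist_entry hT hx h1 (by omega)
  unfold IsBetween at hb
  rw [ha m h1 h2, SimpleGraph.dist_self] at hb
  rw [ha m h1 h2] at this
  omega

lemma contraction_magDiff_mcGen_of_not_isAlternating (hT : T.IsTree) {k : ℕ}
    {x : Fin (k + 2) → V} (hx : IsMagTuple T (k + 1) x) (hna : ¬ IsAlternating x) :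
    contraction T (k + 1) k (magDiff T k (k + 1) (mcGen T (k + 1) x)) = mcGen T (k + 1) x := by
  obtain ⟨m, hm⟩ := exists_isRemovable_of_not_isAlternating hT hx hna
  obtain ⟨j, hj⟩ := exists_isFirstCritical ⟨m, Or.inr hm⟩
  have hlong : ¬ IsLongStep T x j := fun ⟨h1, h2, h3⟩ => by
    rw [dist_entry_eq_one hT.connected hx h1 h2] at h3
    omega
  have := magDiff_contraction_add_contraction_magDiff hT hx ⟨m, Or.inr hm⟩
  rwa [contraction_mcGen_of_not_isLongStep hx hj hlong, map_zero, zero_add] at this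

lemma entry_altTuple {l : ℕ} (e : {p : V × V // T.Adj p.1 p.2}) {m : ℕ} (hm : m ≤ l) :
    entry (altTuple l e) m = if m % 2 = 0 then e.1.1 else e.1.2 := by
  simp only [entry, altTuple, Nat.min_eq_left hm]

lemma isMagTuple_altTuple (hT : T.Connected) (l : ℕ) (e : {p : V × V // T.Adj p.1 p.2}) :
    IsMagTuple T l (altTuple l e) := by
  have hstep : ∀ i ∈ Finset.range l,
      T.dist (entry (altTuple l e) i) (entry (altTuple l e) (i + 1)) = 1 := by
    intro i hi
    rw [entry_altTuple e (by simp at hi; omega), entry_altTuple e (by simp at hi; omega)]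
    have := dist_eq_one_iff_adj.mpr e.2
    have := dist_eq_one_iff_adj.mpr e.2.symm
    split_ifs <;> omega
  refine (isMagTuple_iff hT _).mpr ⟨fun m h1 h2 => ?_, ?_⟩
  · rw [entry_altTuple e (by omega), entry_altTuple e h2]
    split_ifs <;> first | omega | exact e.2.ne | exact e.2.ne'
  · rw [natLen, Finset.sum_congr rfl hstep]
    simp

lemma isAlternating_altTuple {l : ℕ} (e : {p : V × V // T.Adj p.1 p.2}) :
    IsAlternating (altTuple l e) := by
  intro m h1 h2
  rw [entry_altTuple e (by omega), entry_altTuple e h2, show (m - 1) % 2 = (m + 1) % 2 by omega]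

lemma altTuple_eq_of_isAlternating {l : ℕ} {x : Fin (l + 1) → V} (ha : IsAlternating x)
    (hadj : T.Adj (entry x 0) (entry x 1)) : altTuple l ⟨(entry x 0, entry x 1), hadj⟩ = x := by
  refine tuple_ext fun n hn => ?_
  rw [entry_altTuple _ hn]
  induction n using Nat.strong_induction_on with
  | _ n ih =>
    rcases Nat.lt_or_ge n 2 with hn2 | hn2
    · interval_cases n <;> rfl
    · have := ha (n - 1) (by omega) (by omega)
      rw [Nat.sub_add_cancel (by omega : 1 ≤ n)] at this
      rw [← this, ← ih (n - 1 - 1) (by omega) (by omega), show (n - 1 - 1) % 2 = n % 2 by omega]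

end TopDegree

section Diagonal

variable {T : SimpleGraph V}

lemma isEmpty_magTuple_of_lt (hT : T.Connected) {k l : ℕ} (h : l < k) :
    IsEmpty (MagTuple T k l) :=
  ⟨fun x => by
    have := le_natLen hT x.2
    have := ((isMagTuple_iff hT _).mp x.2).2
    omega⟩

lemma magDiff_comp_contraction_add (hT : T.IsTree) {k l : ℕ} (hl : l ≠ k + 1) :
    (magDiff T (k + 1) l).comp (contraction T l (k + 1))
      + (contraction T l k).comp (magDiff T k l) = AddMonoidHom.id _ :=
  hom_ext_mcGen fun x =>
    magDiff_contraction_add_contraction_magDiff hT x.2 (exists_isCritical hT.connected x.2 hl)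

theorem subsingleton_MH_of_ne (hT : T.IsTree) {k l : ℕ} (h : k ≠ l) :
    Subsingleton (MH T k l) := by
  cases k with
  | zero =>
    have := isEmpty_magTuple_zero (G := T) (Nat.pos_of_ne_zero h.symm)
    exact subsingleton_MH_of_isEmpty
  | succ k =>
    exact subsingleton_MH_succ fun z hz => ⟨contraction T l (k + 1) z,
      apply_apply_eq_self_of_add_eq_id (magDiff_comp_contraction_add hT (Ne.symm h)) hz⟩

def edgesToChains (T : SimpleGraph V) (l : ℕ) :
    FreeAbelianGroup {p : V × V // T.Adj p.1 p.2} →+ MC T l l :=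
  FreeAbelianGroup.lift fun e => mcGen T l (altTuple l e)

def chainsToEdges (T : SimpleGraph V) (l : ℕ) :
    MC T l l →+ FreeAbelianGroup {p : V × V // T.Adj p.1 p.2} :=
  FreeAbelianGroup.lift fun x =>
    if h : IsAlternating x.1 ∧ T.Adj (entry x.1 0) (entry x.1 1) then
      FreeAbelianGroup.of ⟨(entry x.1 0, entry x.1 1), h.2⟩
    else 0

lemma edgesToChains_of {l : ℕ} (e : {p : V × V // T.Adj p.1 p.2}) :
    edgesToChains T l (FreeAbelianGroup.of e) = mcGen T l (altTuple l e) :=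
  FreeAbelianGroup.lift_apply_of _ _

lemma chainsToEdges_mcGen {l : ℕ} {x : Fin (l + 1) → V} (hx : IsMagTuple T l x) :
    chainsToEdges T l (mcGen T l x)
      = if h : IsAlternating x ∧ T.Adj (entry x 0) (entry x 1) then
          FreeAbelianGroup.of ⟨(entry x 0, entry x 1), h.2⟩
        else 0 := by
  rw [mcGen_of_isMagTuple hx]
  exact FreeAbelianGroup.lift_apply_of _ _

lemma chainsToEdges_comp_edgesToChains (hT : T.Connected) {l : ℕ} (hl : 0 < l) :
    (chainsToEdges T l).comp (edgesToChains T l) = AddMonoidHom.id _ :=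
  FreeAbelianGroup.lift_ext _ _ fun e => by
    have h0 : entry (altTuple l e) 0 = e.1.1 := by rw [entry_altTuple e (Nat.zero_le l)]; rfl
    have h1 : entry (altTuple l e) 1 = e.1.2 := by rw [entry_altTuple e hl]; rfl
    have hadj : T.Adj (entry (altTuple l e) 0) (entry (altTuple l e) 1) := h0 ▸ h1 ▸ e.2
    rw [AddMonoidHom.comp_apply, edgesToChains_of, chainsToEdges_mcGen (isMagTuple_altTuple hT l e),
      dif_pos ⟨isAlternating_altTuple e, hadj⟩]
    simp only [h0, h1]
    rfl

lemma magDiff_edgesToChains (hT : T.Connected) (k : ℕ) :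
    (magDiff T k (k + 1)).comp (edgesToChains T (k + 1)) = 0 :=
  FreeAbelianGroup.lift_ext _ _ fun e => by
    rw [AddMonoidHom.comp_apply, edgesToChains_of, AddMonoidHom.zero_apply]
    exact magDiff_mcGen_eq_zero hT (isMagTuple_altTuple hT _ e)
      (not_isRemovable_of_isAlternating hT (isMagTuple_altTuple hT _ e) (isAlternating_altTuple e))

lemma edgesToChains_comp_chainsToEdges_add (hT : T.IsTree) (k : ℕ) :
    (edgesToChains T (k + 1)).comp (chainsToEdges T (k + 1))
      + (contraction T (k + 1) k).comp (magDiff T k (k + 1)) = AddMonoidHom.id _ :=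
  hom_ext_mcGen fun x => by
    rw [AddMonoidHom.add_apply, AddMonoidHom.comp_apply, AddMonoidHom.comp_apply,
      chainsToEdges_mcGen x.2, AddMonoidHom.id_apply]
    by_cases ha : IsAlternating x.1
    · have hadj : T.Adj (entry x.1 0) (entry x.1 1) :=
        dist_eq_one_iff_adj.mp (dist_entry_eq_one hT.connected x.2 (m := 1) le_rfl (by omega))
      rw [dif_pos ⟨ha, hadj⟩, edgesToChains_of, altTuple_eq_of_isAlternating ha hadj,
        magDiff_mcGen_eq_zero hT.connected x.2
          (not_isRemovable_of_isAlternating hT.connected x.2 ha),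
        map_zero, add_zero]
    · rw [dif_neg (fun h => ha h.1), map_zero, zero_add,
        contraction_magDiff_mcGen_of_not_isAlternating hT x.2 ha]

theorem exists_addEquiv_MH_diag (hT : T.IsTree) {l : ℕ} (hl : 0 < l) :
    ∃ φ : FreeAbelianGroup {p : V × V // T.Adj p.1 p.2} ≃+ MH T l l,
      ∀ e, φ (FreeAbelianGroup.of e) = mkMH T l l (mcGen T l (altTuple l e)) := by
  obtain ⟨k, rfl⟩ : ∃ k, l = k + 1 := ⟨l - 1, by omega⟩
  have := isEmpty_magTuple_of_lt hT.connected (k := k + 1 + 1) (l := k + 1) (by omega)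
  have hcyc : ∀ a, edgesToChains T (k + 1) a ∈ magCycles T (k + 1) (k + 1) := fun a =>
    AddMonoidHom.mem_ker.mpr (DFunLike.congr_fun (magDiff_edgesToChains hT.connected k) a)
  obtain ⟨φ, hφ⟩ := exists_addEquiv_MH _ (chainsToEdges T (k + 1)) hcyc
    (DFunLike.congr_fun (chainsToEdges_comp_edgesToChains hT.connected hl))
    fun _ hz => apply_apply_eq_self_of_add_eq_id (edgesToChains_comp_chainsToEdges_add hT k) hz
  exact ⟨φ, fun e => by rw [hφ, edgesToChains_of]⟩

end Diagonal

theorem MH_tree_general {V : Type*} (T : SimpleGraph V) (hT : T.IsTree) :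
    Nonempty (MH T 0 0 ≃+ FreeAbelianGroup V) ∧
      (∀ l : ℕ, 0 < l →
        ∃ φ : FreeAbelianGroup {p : V × V // T.Adj p.1 p.2} ≃+ MH T l l,
          ∀ e, φ (FreeAbelianGroup.of e) = mkMH T l l (mcGen T l (altTuple l e))) ∧
      ∀ k l : ℕ, k ≠ l → Subsingleton (MH T k l) :=
  ⟨nonempty_addEquiv_MH_zero_zero T, fun _ => exists_addEquiv_MH_diag hT,
    fun _ _ => subsingleton_MH_of_ne hT⟩

/-- **Statement 14 (Magnitude homology of trees).** For a tree `T`: `MH_{0,0}(T)` is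
the free abelian group on the vertices; for `l > 0`, `MH_{l,l}(T)` is the free abelian
group on the oriented edges, the generator `(x,y)` corresponding to the homology class
of the alternating tuple `(x,y,x,y,…)` with `l+1` entries; and `MH_{k,l}(T) = 0` for
`k ≠ l`. -/
theorem MH_tree {V : Type*} [Fintype V] (T : SimpleGraph V) (hT : T.IsTree) :
    Nonempty (MH T 0 0 ≃+ FreeAbelianGroup V) ∧
      (∀ l : ℕ, 0 < l →
        ∃ φ : FreeAbelianGroup {p : V × V // T.Adj p.1 p.2} ≃+ MH T l l,
          ∀ e, φ (FreeAbelianGroup.of e) = mkMH T l l (mcGen T l (altTuple l e))) ∧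
      ∀ k l : ℕ, k ≠ l → Subsingleton (MH T k l) :=
  MH_tree_general T hT

end MagnitudeHomology
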